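/- arXiv:1508.04486 — 7 statements merged into one kernel-verified Lean document; each statement's English description precedes it below -/
import Mathlib

section
/- The combination matrix R^c has rank equal to MK − (K − 1). -/
/-- The combination matrix `R^c`: rows indexed by pairs `(k, m)` with `k ∈ [K]`, `m ∈ [M]`,
columns indexed by tuples `f ∈ [M]^K`; the entry at row `(k, m)` and column `f` is `1` if
`f k = m` and `0` otherwise. -/
def combMatrix (M K : ℕ) : Matrix (Fin K × Fin M) (Fin K → Fin M) ℝ :=
  fun km f => if f km.1 = km.2 then 1 else 0

open Finset Module LinearMap Matrix

/-- The sum functional on `Fin K → ℝ`. -/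
def sumLM (K : ℕ) : (Fin K → ℝ) →ₗ[ℝ] ℝ where
  toFun c := ∑ k, c k
  map_add' := by intros; simp [Finset.sum_add_distrib]
  map_smul' := by intros; simp [Finset.mul_sum]

/-- The combination matrix `R^c` has rank `MK - (K - 1)`. -/
theorem rank_combMatrix (M K : ℕ) (hM : 0 < M) (hK : 0 < K) :
    (combMatrix M K).rank = M * K - (K - 1) := by
  classical
  set A := combMatrix M K with hA
  set T := Aᵀ.mulVecLin with hT
  set z : Fin M := Fin.mk 0 hM with hz
  have hTval : ∀ (x : Fin K × Fin M → ℝ) (f : Fin K → Fin M),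
      T x f = ∑ k : Fin K, x (k, f k) := by
    intro x f
    simp only [hT, Matrix.mulVecLin_apply, Matrix.mulVec, Matrix.transpose_apply,
      dotProduct, hA, combMatrix]
    rw [Fintype.sum_prod_type]
    refine Finset.sum_congr rfl fun k _ => ?_
    simp [ite_mul]
  -- kernel membership characterization
  have hker0 : ∀ x ∈ ker T, ∑ k : Fin K, x (k, z) = 0 := by
    intro x hx
    have := congrFun (LinearMap.mem_ker.mp hx) (fun _ => z)
    simpa [hTval] using this
  have hkerc : ∀ x ∈ ker T, ∀ k m, x (k, m) = x (k, z) := by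
    intro x hx k m
    have h0 := hker0 x hx
    have h1 := congrFun (LinearMap.mem_ker.mp hx) (Function.update (fun _ => z) k m)
    rw [hTval] at h1
    have hsplit : ∀ k' : Fin K, x (k', Function.update (fun _ => z) k m k')
        = x (k', z) + (if k' = k then x (k, m) - x (k, z) else 0) := by
      intro k'
      by_cases h : k' = k <;> simp [Function.update, h]
    simp only [hsplit, Finset.sum_add_distrib, h0, Finset.sum_ite_eq',
      Finset.mem_univ, if_true, Pi.zero_apply] at h1
    linarith
  -- the sum functional is surjective
  have hσrange : range (sumLM K) = ⊤ := by
    rw [LinearMap.range_eq_top]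
    intro r
    refine ⟨Pi.single ⟨0, hK⟩ r, ?_⟩
    simp [sumLM]
  -- equivalence between the kernel of `T` and the kernel of the sum functional
  let e : ker T ≃ₗ[ℝ] ker (sumLM K) :=
    { toFun := fun x => ⟨fun k => x.1 (k, z), by
        simpa [sumLM, LinearMap.mem_ker] using hker0 x.1 x.2⟩
      invFun := fun c => ⟨fun km => c.1 km.1, by
        have hc := c.2
        rw [LinearMap.mem_ker] at hc
        rw [LinearMap.mem_ker]
        ext f
        rw [hTval]
        exact hc⟩
      map_add' := by intros; rfl
      map_smul' := by intros; rfl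
      left_inv := by
        intro x
        ext km
        exact (hkerc x.1 x.2 km.1 km.2).symm
      right_inv := by intro c; rfl }
  have hkerT : finrank ℝ (ker T) = K - 1 := by
    have h1 := LinearMap.finrank_range_add_finrank_ker (sumLM K)
    rw [hσrange, finrank_top] at h1
    simp only [Module.finrank_self, Module.finrank_pi, Fintype.card_fin] at h1
    have := e.finrank_eq
    omega
  have hrn := LinearMap.finrank_range_add_finrank_ker T
  have hdom : finrank ℝ (Fin K × Fin M → ℝ) = K * M := by
    rw [Module.finrank_pi]
    simp [Fintype.card_prod]
  rw [hdom, hkerT] at hrn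
  have hrank : A.rank = Aᵀ.rank := (Matrix.rank_transpose A).symm
  have hdef : Aᵀ.rank = finrank ℝ (LinearMap.range T) := rfl
  rw [hrank, hdef]
  have hmk : M * K = K * M := Nat.mul_comm M K
  omega
end

section
/- A vector α ∈ ℝ^{MK}, with entries α^k_m indexed by pairs (k,m), satisfies α^T R^c = 0 if and only if there exist constants c_1,...,c_K ∈ ℝ with c_1 + ... + c_K = 0 such that α^k_m = c_k for all k ∈ {1,...,K} and all m ∈ {1,...,M}. -/
open Matrix in
lemma vecMul_combMatrix_apply (M K : ℕ) (α : Fin K × Fin M → ℝ) (f : Fin K → Fin M) :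
    (α ᵥ* combMatrix M K) f = ∑ k, α (k, f k) := by
  simp [Matrix.vecMul, dotProduct, combMatrix, Fintype.sum_prod_type, mul_ite]

open Matrix in
/-- A vector `α ∈ ℝ^{MK}` satisfies `αᵀ R^c = 0` iff there are constants `c₁, …, c_K`
summing to zero with `α (k, m) = c k` for all `k, m`. -/
theorem vecMul_combMatrix_eq_zero_iff (M K : ℕ) (hM : 0 < M) (hK : 0 < K)
    (α : Fin K × Fin M → ℝ) :
    α ᵥ* combMatrix M K = 0 ↔
      ∃ c : Fin K → ℝ, (∑ k, c k = 0) ∧ ∀ (k : Fin K) (m : Fin M), α (k, m) = c k := by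
  have key : ∀ f, (α ᵥ* combMatrix M K) f = ∑ k, α (k, f k) :=
    vecMul_combMatrix_apply M K α
  constructor
  · intro h
    have h' : ∀ f : Fin K → Fin M, ∑ k, α (k, f k) = 0 := by
      intro f; rw [← key f, h]; rfl
    set m0 : Fin M := ⟨0, hM⟩
    refine ⟨fun k => α (k, m0), ?_, ?_⟩
    · simpa using h' (fun _ => m0)
    · intro k m
      have h1 := h' (Function.update (fun _ => m0) k m)
      have h2 := h' (fun _ => m0)
      rw [← Finset.add_sum_erase _ _ (Finset.mem_univ k)] at h1 h2
      have : ∑ j ∈ Finset.univ.erase k, α (j, Function.update (fun _ => m0) k m j)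
          = ∑ j ∈ Finset.univ.erase k, α (j, m0) := by
        refine Finset.sum_congr rfl fun j hj => ?_
        rw [Function.update_of_ne (Finset.ne_of_mem_erase hj)]
      rw [Function.update_self, this] at h1
      linarith
  · rintro ⟨c, hsum, hc⟩
    funext f
    rw [key f]
    simp only [hc]
    simpa using hsum
end

section
/- Let R ∈ ℝ^{MK × T} be any matrix each of whose columns is a column of the combination matrix R^c, i.e. for every t ∈ {1,...,T} there is a tuple f_t ∈ {1,...,M}^K such that the t-th column of R is the vertical concatenation of the standard basis vectors e_{(f_t)_1},...,e_{(f_t)_K} of ℝ^M. Then rank(R) ≤ MK − (K − 1). -/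
/-- If every column of `R ∈ ℝ^{MK × T}` is a column of the combination matrix `R^c`
(i.e. a vertical concatenation of standard basis vectors of `ℝ^M`), then
`rank R ≤ MK - (K - 1)`. -/
theorem rank_assignment_le (M K T : ℕ) (hM : 0 < M) (hK : 0 < K)
    (R : Matrix (Fin K × Fin M) (Fin T) ℝ)
    (hR : ∀ t : Fin T, ∃ f : Fin K → Fin M,
      ∀ (k : Fin K) (m : Fin M), R (k, m) t = if f k = m then 1 else 0) :
    R.rank ≤ M * K - (K - 1) := by
  classical
  set k0 : Fin K := ⟨0, hK⟩ with hk0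
  set A : Matrix {k : Fin K // k ≠ k0} (Fin K × Fin M) ℝ :=
    fun k' p => (if p.1 = (k' : Fin K) then 1 else 0) - (if p.1 = k0 then 1 else 0)
    with hA
  set ψ := A.mulVecLin with hψ
  -- A * R = 0
  have hAR : A * R = 0 := by
    ext k' t
    obtain ⟨f, hf⟩ := hR t
    simp only [Matrix.mul_apply, Matrix.zero_apply]
    rw [Fintype.sum_prod_type]
    have key : ∀ k : Fin K,
        ∑ m : Fin M, A k' (k, m) * R (k, m) t
          = (if k = (k' : Fin K) then 1 else 0) - (if k = k0 then 1 else 0) := by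
      intro k
      have : ∑ m : Fin M, A k' (k, m) * R (k, m) t
          = ((if k = (k' : Fin K) then 1 else 0) - (if k = k0 then 1 else 0))
            * ∑ m : Fin M, R (k, m) t := by
        rw [Finset.mul_sum]
      rw [this]
      have : ∑ m : Fin M, R (k, m) t = 1 := by
        simp only [hf]
        simp
      rw [this, mul_one]
    rw [Finset.sum_congr rfl (fun k _ => key k)]
    rw [Finset.sum_sub_distrib]
    simp
  -- range of R.mulVecLin ⊆ ker ψ
  have hker : LinearMap.range R.mulVecLin ≤ LinearMap.ker ψ := by
    rintro _ ⟨v, rfl⟩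
    simp only [LinearMap.mem_ker, hψ, Matrix.mulVecLin_apply]
    rw [Matrix.mulVec_mulVec, hAR, Matrix.zero_mulVec]
  -- ψ is surjective
  have hsurj : Function.Surjective ψ := by
    intro g
    refine ⟨fun p => if h : p.1 ≠ k0 ∧ p.2 = ⟨0, hM⟩ then g ⟨p.1, h.1⟩ else 0, ?_⟩
    funext k'
    simp only [hψ, Matrix.mulVecLin_apply, Matrix.mulVec, dotProduct]
    rw [Fintype.sum_prod_type]
    have key : ∀ k : Fin K,
        (∑ m : Fin M, A k' (k, m) *
          (if h : (k, m).1 ≠ k0 ∧ (k, m).2 = (⟨0, hM⟩ : Fin M) then g ⟨(k, m).1, h.1⟩ else 0))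
        = if h : k ≠ k0 then A k' (k, ⟨0, hM⟩) * g ⟨k, h⟩ else 0 := by
      intro k
      by_cases hk : k = k0
      · subst hk
        simp
      · rw [dif_pos hk]
        rw [Finset.sum_eq_single (⟨0, hM⟩ : Fin M)]
        · simp [hk]
        · intro m _ hm
          simp [hm]
        · simp
    rw [Finset.sum_congr rfl (fun k _ => key k)]
    rw [Finset.sum_eq_single (k' : Fin K)]
    · have hk' : (k' : Fin K) ≠ k0 := k'.2
      rw [dif_pos hk']
      simp [hA, hk']
    · intro k _ hk
      by_cases hkk : k = k0
      · simp [hkk]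
      · rw [dif_pos hkk]
        have : A k' (k, ⟨0, hM⟩) = 0 := by
          simp [hA, hk, hkk]
        rw [this, zero_mul]
    · simp
  -- dimension count
  have hcard : Fintype.card {k : Fin K // k ≠ k0} = K - 1 := by
    rw [Fintype.card_subtype_compl, Fintype.card_subtype_eq, Fintype.card_fin]
  have hrn := LinearMap.finrank_range_add_finrank_ker ψ
  have hrange : Module.finrank ℝ (LinearMap.range ψ) = K - 1 := by
    rw [LinearMap.range_eq_top.mpr hsurj]
    rw [finrank_top, Module.finrank_pi, hcard]
  have hdom : Module.finrank ℝ ((Fin K × Fin M) → ℝ) = M * K := by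
    rw [Module.finrank_pi, Fintype.card_prod, Fintype.card_fin, Fintype.card_fin, mul_comm]
  rw [hrange, hdom] at hrn
  have hkerdim : Module.finrank ℝ (LinearMap.ker ψ) = M * K - (K - 1) := by omega
  calc R.rank = Module.finrank ℝ (LinearMap.range R.mulVecLin) := rfl
    _ ≤ Module.finrank ℝ (LinearMap.ker ψ) := Submodule.finrank_mono hker
    _ = M * K - (K - 1) := hkerdim
end

section
/- Let R ∈ ℝ^{MK × T} be any matrix each of whose columns is a column of the combination matrix R^c. If K ≥ 2 and L ≥ 1, then there exist matrices O_1, O_2 ∈ ℝ^{L × MK} with O_1 ≠ O_2 such that O_1 R = O_2 R. (Hence the emission matrix of the Gaussian factorial model is unidentifiable even given the true assignment matrix R.) -/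
/-!
In every column of an assignment matrix each block `{k} × {1,…,M}` contains exactly one `1`,
so a row that equals `c k` throughout block `k` pairs with any column to `∑ k, c k`. Taking
`c = e_{k₀} - e_{k₁}` for two factors `k₀ ≠ k₁` gives a nonzero `O` with `O R = 0`.
-/

open Matrix Finset

/-- The columns of the combination matrix `R^c` are the indicators of the graphs of all
`f : κ → μ`; an assignment matrix takes each of its columns from among them. -/
def IsAssignmentMatrix {κ μ τ α : Type*} [DecidableEq μ] [Zero α] [One α]
    (R : Matrix (κ × μ) τ α) : Prop :=
  ∀ t, ∃ f : κ → μ, ∀ k m, R (k, m) t = if f k = m then 1 else 0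

theorem IsAssignmentMatrix.sum_block_eq_one {κ μ τ α : Type*} [Fintype μ] [DecidableEq μ]
    [AddCommMonoidWithOne α] {R : Matrix (κ × μ) τ α} (hR : IsAssignmentMatrix R) (k : κ) (t : τ) :
    ∑ m, R (k, m) t = 1 := by
  obtain ⟨f, hf⟩ := hR t
  simp [hf]

def blockConst (ι μ : Type*) {κ α : Type*} (c : κ → α) : Matrix ι (κ × μ) α :=
  of fun _ p => c p.1

theorem blockConst_ne_zero {ι μ κ α : Type*} [Nonempty ι] [Nonempty μ] [Zero α] {c : κ → α}
    (hc : c ≠ 0) : blockConst ι μ c ≠ 0 := by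
  obtain ⟨k, hk⟩ := Function.ne_iff.mp hc
  intro h
  exact hk (congrFun (congrFun h (Classical.arbitrary ι)) (k, Classical.arbitrary μ))

theorem blockConst_mul_eq_zero {ι κ μ τ α : Type*} [Fintype κ] [Fintype μ]
    [NonAssocSemiring α] {R : Matrix (κ × μ) τ α}
    (hR : ∀ k t, ∑ m, R (k, m) t = 1) {c : κ → α} (hc : ∑ k, c k = 0) :
    blockConst ι μ c * R = 0 := by
  ext i t
  simp [blockConst, mul_apply, Fintype.sum_prod_type, ← mul_sum, hR, hc]

theorem exists_ne_zero_sum_eq_zero (κ α : Type*) [Fintype κ] [Nontrivial κ] [AddCommGroup α]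
    [Nontrivial α] : ∃ c : κ → α, c ≠ 0 ∧ ∑ k, c k = 0 := by
  classical
  obtain ⟨a, b, hab⟩ := exists_pair_ne κ
  obtain ⟨x, hx⟩ := exists_ne (0 : α)
  refine ⟨Pi.single a x - Pi.single b x, Function.ne_iff.mpr ⟨a, ?_⟩, ?_⟩
  · simpa [Pi.single_apply, hab] using hx
  · simp [sum_sub_distrib]

/-- Unidentifiability of the factorial model: if every column of `R ∈ ℝ^{MK × T}` is a
column of the combination matrix `R^c`, `K ≥ 2` and `L ≥ 1`, then there exist two distinct
emission matrices `O₁ ≠ O₂` with `O₁ R = O₂ R`. -/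
theorem factorial_model_unidentifiable (M K T L : ℕ) (hM : 0 < M) (hK : 2 ≤ K) (hL : 1 ≤ L)
    (R : Matrix (Fin K × Fin M) (Fin T) ℝ)
    (hR : ∀ t : Fin T, ∃ f : Fin K → Fin M,
      ∀ (k : Fin K) (m : Fin M), R (k, m) t = if f k = m then 1 else 0) :
    ∃ O₁ O₂ : Matrix (Fin L) (Fin K × Fin M) ℝ, O₁ ≠ O₂ ∧ O₁ * R = O₂ * R := by
  have : NeZero M := ⟨hM.ne'⟩
  have : NeZero L := ⟨by omega⟩
  have : Nontrivial (Fin K) := Fin.nontrivial_iff_two_le.mpr hK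
  obtain ⟨c, hc0, hcsum⟩ := exists_ne_zero_sum_eq_zero (Fin K) ℝ
  refine ⟨blockConst (Fin L) (Fin M) c, 0, blockConst_ne_zero hc0, ?_⟩
  rw [Matrix.zero_mul]
  exact blockConst_mul_eq_zero (IsAssignmentMatrix.sum_block_eq_one hR) hcsum
end

section
/- The SC-FM combination matrix R̃^c has rank equal to (M−1)K + 1 = MK − (K − 1); in particular it has full row rank. -/
/-- The SC-FM combination matrix `R̃^c`: rows indexed by pairs `(k, m)` with `k ∈ [K]`,
`m ∈ [M-1]` (representing the value `m + 1 ∈ {1, …, M-1}`) together with one extra row;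
columns indexed by tuples `f = (m_1, …, m_K)` with each `m_k ∈ {0, 1, …, M-1}`.
The entry at row `(k, m)` and column `f` is `1` if `m_k = m` and `0` otherwise, and the
entry of the extra row at column `f` is the number of indices `k` with `m_k = 0`. -/
def scCombMatrix (M K : ℕ) : Matrix ((Fin K × Fin (M - 1)) ⊕ Unit) (Fin K → Fin M) ℝ :=
  fun r f =>
    match r with
    | Sum.inl (k, m) => if (f k : ℕ) = (m : ℕ) + 1 then 1 else 0
    | Sum.inr _ => ((Finset.univ.filter fun k => (f k : ℕ) = 0).card : ℝ)

/-!
The columns indexed by the all-zero tuple and by the tuples whose only nonzero entry is `m + 1`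
in position `k` form a square minor of block shape `[[1, 0], [K - 1, K]]`, with determinant
`K ≠ 0`. Hence the rows are linearly independent and the rank is the number of rows.
-/

theorem Matrix.rank_eq_card_height_of_det_submatrix_ne_zero {m n 𝕜 : Type*} [Fintype m]
    [Fintype n] [DecidableEq m] [Field 𝕜] (A : Matrix m n 𝕜) (c : m → n)
    (h : (A.submatrix id c).det ≠ 0) :
    A.rank = Fintype.card m :=
  le_antisymm A.rank_le_card_height <| by
    rw [← rank_of_isUnit _ ((isUnit_iff_isUnit_det _).2 h.isUnit)]
    exact rank_submatrix_le A id c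

namespace scCombMatrix

variable {M K : ℕ}

def testColumn (hM : 1 ≤ M) : (Fin K × Fin (M - 1)) ⊕ Unit → Fin K → Fin M
  | .inl (k, m) => fun j => if j = k then ⟨m + 1, by omega⟩ else ⟨0, hM⟩
  | .inr _ => fun _ => ⟨0, hM⟩

@[simp]
theorem testColumn_inl_val (hM : 1 ≤ M) (k k' : Fin K) (m : Fin (M - 1)) :
    (testColumn hM (.inl (k', m)) k : ℕ) = if k = k' then (m : ℕ) + 1 else 0 := by
  simp only [testColumn]
  split_ifs <;> rfl

theorem submatrix_testColumn (hM : 1 ≤ M) :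
    (scCombMatrix M K).submatrix id (testColumn hM) =
      Matrix.fromBlocks 1 0 (Matrix.of fun _ _ => ((K - 1 : ℕ) : ℝ))
        (Matrix.of fun _ _ => (K : ℝ)) := by
  ext (⟨k, m⟩ | _) (⟨k', m'⟩ | _)
  · rw [Matrix.fromBlocks_apply₁₁, Matrix.one_apply]
    simp only [Matrix.submatrix_apply, id, scCombMatrix, testColumn_inl_val]
    split_ifs <;> simp_all [Fin.ext_iff]
  · simp [testColumn, scCombMatrix]
  · simp [Finset.filter_ne', scCombMatrix]
  · simp [testColumn, scCombMatrix]

theorem det_submatrix_testColumn (hM : 1 ≤ M) :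
    ((scCombMatrix M K).submatrix id (testColumn hM)).det = K := by
  rw [submatrix_testColumn, Matrix.det_fromBlocks_zero₁₂, Matrix.det_one, Matrix.det_unique,
    one_mul]
  rfl

end scCombMatrix

/-- The SC-FM combination matrix `R̃^c` has rank `(M-1)K + 1 = MK - (K-1)`;
in particular it has full row rank. -/
theorem rank_scCombMatrix (M K : ℕ) (hM : 1 ≤ M) (hK : 1 ≤ K) :
    (scCombMatrix M K).rank = (M - 1) * K + 1 ∧
      (scCombMatrix M K).rank = M * K - (K - 1) := by
  have hdet : ((scCombMatrix M K).submatrix id (scCombMatrix.testColumn hM)).det ≠ 0 := by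
    rw [scCombMatrix.det_submatrix_testColumn]
    exact Nat.cast_ne_zero.2 (by omega)
  have hrank : (scCombMatrix M K).rank = (M - 1) * K + 1 := by
    rw [Matrix.rank_eq_card_height_of_det_submatrix_ne_zero _ _ hdet]
    simp [mul_comm]
  refine ⟨hrank, ?_⟩
  rw [hrank, Nat.sub_one_mul]
  have : K ≤ M * K := Nat.le_mul_of_pos_left K hM
  omega
end

section
/- If a vector α ∈ ℝ^{(M−1)K+1} satisfies α^T R̃^c = 0, then α = 0; that is, the rows of the SC-FM combination matrix R̃^c are linearly independent. -/
namespace scCombMatrix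

variable {M K : ℕ} [NeZero M]

theorem col_zero : (fun r => scCombMatrix M K r 0) = Pi.single (Sum.inr ()) (K : ℝ) := by
  funext r
  rcases r with ⟨k, m⟩ | ⟨⟩ <;> simp [scCombMatrix]

theorem col_single (k : Fin K) {m : Fin (M - 1)} {v : Fin M} (hv : (v : ℕ) = m + 1) :
    (fun r => scCombMatrix M K r (Pi.single k v)) =
      Pi.single (Sum.inl (k, m)) 1 + Pi.single (Sum.inr ()) ((K - 1 : ℕ) : ℝ) := by
  funext r
  rcases r with ⟨j, n⟩ | ⟨⟩
  · by_cases hj : j = k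
    · subst hj
      simp [scCombMatrix, Pi.single_apply, hv, eq_comm, Fin.val_eq_val]
    · simp [scCombMatrix, hj]
  · have hv0 : v ≠ 0 := by simp [Fin.ext_iff, hv]
    simp [scCombMatrix, Pi.single_apply, hv0, Finset.filter_ne']

end scCombMatrix

open Matrix in
/-- If `αᵀ R̃^c = 0` then `α = 0`: the rows of the SC-FM combination matrix are
linearly independent. -/
theorem scCombMatrix_rows_linearIndependent (M K : ℕ) (hM : 1 ≤ M) (hK : 1 ≤ K)
    (α : (Fin K × Fin (M - 1)) ⊕ Unit → ℝ)
    (hα : α ᵥ* scCombMatrix M K = 0) : α = 0 := by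
  have : NeZero M := ⟨by omega⟩
  have hcol (f : Fin K → Fin M) : α ⬝ᵥ (fun r => scCombMatrix M K r f) = 0 := congrFun hα f
  have hextra : α (Sum.inr ()) = 0 := by
    have h := hcol 0
    rw [scCombMatrix.col_zero, dotProduct_single, mul_eq_zero] at h
    exact h.resolve_right (Nat.cast_ne_zero.mpr (by omega))
  funext r
  rcases r with ⟨k, m⟩ | ⟨⟩
  · have h := hcol (Pi.single k ⟨m + 1, Nat.add_lt_of_lt_sub m.isLt⟩)
    rw [scCombMatrix.col_single k rfl, dotProduct_add, dotProduct_single, dotProduct_single,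
      hextra] at h
    simpa using h
  · exact hextra
end

section
/- If two matrices O_1, O_2 ∈ ℝ^{L × ((M−1)K+1)} satisfy O_1 R̃^c = O_2 R̃^c, then O_1 = O_2. (That is, the emission matrix of the shared component factorial model is identifiable given an assignment matrix containing all possible assignment columns.) -/
/-! At the all-zero column, `v ᵥ* R̃^c` equals `K • v_extra`, so the extra coordinate of any `v`
in the left kernel vanishes as `K ≥ 1`. At the column whose only nonzero state is `m + 1`, in
position `k`, it then equals `v (k, m)`. So `R̃^c` has a trivial left kernel and cancels on the
right. -/

open Matrix Finset

namespace scCombMatrix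

variable {M K : ℕ}

lemma vecMul_apply (v : (Fin K × Fin (M - 1)) ⊕ Unit → ℝ) (f : Fin K → Fin M) :
    (v ᵥ* scCombMatrix M K) f =
      (∑ p : Fin K × Fin (M - 1), if (f p.1 : ℕ) = p.2 + 1 then v (.inl p) else 0)
        + #{k | (f k : ℕ) = 0} * v (.inr ()) := by
  simp [vecMul, dotProduct, Fintype.sum_sum_type, scCombMatrix, mul_comm]

lemma vecMul_apply_const_zero (hM : 1 ≤ M) (v : (Fin K × Fin (M - 1)) ⊕ Unit → ℝ) :
    (v ᵥ* scCombMatrix M K) (fun _ => ⟨0, hM⟩) = K * v (.inr ()) := by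
  simp [vecMul_apply]

lemma vecMul_apply_update_const_zero (hM : 1 ≤ M) (v : (Fin K × Fin (M - 1)) ⊕ Unit → ℝ)
    (k : Fin K) (m : Fin (M - 1)) :
    (v ᵥ* scCombMatrix M K) (Function.update (fun _ => ⟨0, hM⟩) k ⟨m + 1, by omega⟩) =
      v (.inl (k, m)) + (K - 1 : ℕ) * v (.inr ()) := by
  set f : Fin K → Fin M := Function.update (fun _ => ⟨0, hM⟩) k ⟨m + 1, by omega⟩
  have h_state : ∀ p : Fin K × Fin (M - 1), (f p.1 : ℕ) = p.2 + 1 ↔ p = (k, m) := by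
    rintro ⟨k', m'⟩
    by_cases hk : k' = k
    · subst hk
      simp [f, Fin.ext_iff, eq_comm]
    · simp [f, hk]
  have h_zeros : ({i | (f i : ℕ) = 0} : Finset (Fin K)) = univ.erase k := by
    ext i
    by_cases hi : i = k <;> simp [f, hi]
  simp only [vecMul_apply, h_state, h_zeros, sum_ite_eq', mem_univ, if_true, card_erase_of_mem,
    card_univ, Fintype.card_fin]

theorem vecMul_injective (hM : 1 ≤ M) (hK : 1 ≤ K) :
    Function.Injective (scCombMatrix M K).vecMul := by
  refine (injective_iff_map_eq_zero (vecMulLinear (scCombMatrix M K))).2 fun v hv => ?_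
  have h_extra : v (.inr ()) = 0 := by
    have h0 := congrFun hv (fun _ => ⟨0, hM⟩)
    rw [vecMulLinear_apply, vecMul_apply_const_zero] at h0
    simpa [Nat.one_le_iff_ne_zero.1 hK] using h0
  funext r
  rcases r with ⟨k, m⟩ | ⟨⟩
  · have hkm := congrFun hv (Function.update (fun _ => ⟨0, hM⟩) k ⟨m + 1, by omega⟩)
    rw [vecMulLinear_apply, vecMul_apply_update_const_zero, h_extra] at hkm
    simpa using hkm
  · exact h_extra

end scCombMatrix

theorem scfm_identifiable_general (M K L : ℕ) (hM : 1 ≤ M) (hK : 1 ≤ K)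
    (O₁ O₂ : Matrix (Fin L) ((Fin K × Fin (M - 1)) ⊕ Unit) ℝ)
    (h : O₁ * scCombMatrix M K = O₂ * scCombMatrix M K) : O₁ = O₂ :=
  funext fun l => scCombMatrix.vecMul_injective hM hK (congrFun h l)

/-- Identifiability of the SC-FM emission matrix: if `O₁ R̃^c = O₂ R̃^c` then `O₁ = O₂`. -/
theorem scfm_identifiable (M K L : ℕ) (hM : 1 ≤ M) (hK : 1 ≤ K) (hL : 1 ≤ L)
    (O₁ O₂ : Matrix (Fin L) ((Fin K × Fin (M - 1)) ⊕ Unit) ℝ)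
    (h : O₁ * scCombMatrix M K = O₂ * scCombMatrix M K) : O₁ = O₂ :=
  scfm_identifiable_general M K L hM hK O₁ O₂ h
end
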